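/- Let D = max{ max_{k∈[n]} ‖μ_k‖, √γ_min }. For i ∈ [L], j ∈ [n], let p̃_{(i,j)} be the density of N(μ_j, β_i⁻¹Σ) and define p̃_i(j|x) = w_j p̃_{(i,j)}(x) / ∑_{k=1}^n w_k p̃_{(i,k)}(x). Then for all i ∈ [L], j ∈ [n], and x ∈ ℝ^d: (1) p̃_{(i,j)}(x) ≥ (β_i/(2πγ_max))^{d/2} exp( −(β_i/(2γ_min)) (‖x‖ + D)² ), and (2) p̃_i(j|x) ≥ w_j exp( −(β_i/γ_min) (‖x‖ + D)² ). -/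

import Mathlib

open MeasureTheory Matrix

noncomputable section

/-- Euclidean norm of a vector in `ℝ^d`. -/
def euclNorm {d : ℕ} (v : Fin d → ℝ) : ℝ := Real.sqrt (∑ k, v k ^ 2)

/-- Quadratic form `v ↦ vᵀ Σ⁻¹ v`. -/
def quadForm {d : ℕ} (Sig : Matrix (Fin d) (Fin d) ℝ) (v : Fin d → ℝ) : ℝ :=
  v ⬝ᵥ (Sig⁻¹ *ᵥ v)

/-- Density of the Gaussian distribution `N(μ, β⁻¹ Σ)` on `ℝ^d`. -/
def gaussDens {d : ℕ} (Sig : Matrix (Fin d) (Fin d) ℝ) (β : ℝ) (μ x : Fin d → ℝ) : ℝ :=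
  (β / (2 * Real.pi)) ^ ((d : ℝ) / 2) / Real.sqrt Sig.det *
    Real.exp (-(β / 2) * quadForm Sig (x - μ))

/-! The density is a normalising constant times an exponential factor. Since `det Σ ≤ γ_max^d`,
the constant is at least `(β/(2πγ_max))^{d/2}`; since `Σ⁻¹ ≤ γ_min⁻¹` in the Loewner order and
`‖x - μ_j‖ ≤ ‖x‖ + D`, the exponent is at least `-(β/(2γ_min))(‖x‖ + D)²`. Every component density
is at most the common normalising constant, hence so is the mixture density, and in the posterior
the constant cancels. -/

section SpectralBounds

open scoped MatrixOrder

variable {ι : Type*} [Fintype ι] [DecidableEq ι]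

theorem Matrix.dotProduct_mulVec_le_of_le_algebraMap {A : Matrix ι ι ℝ} {c : ℝ}
    (h : A ≤ algebraMap ℝ _ c) (v : ι → ℝ) : v ⬝ᵥ (A *ᵥ v) ≤ c * (v ⬝ᵥ v) := by
  have := (Matrix.le_iff.mp h).dotProduct_mulVec_nonneg v
  simpa [sub_mulVec, dotProduct_sub, Algebra.algebraMap_eq_smul_one, smul_mulVec,
    dotProduct_smul] using this

theorem Matrix.PosDef.inv_le_algebraMap_inv {A : Matrix ι ι ℝ} (hA : A.PosDef) {c : ℝ}
    (hc0 : 0 < c) (hc : ∀ i, c ≤ hA.isHermitian.eigenvalues i) :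
    A⁻¹ ≤ algebraMap ℝ _ c⁻¹ := by
  have hu : IsUnit A := (isUnit_iff_isUnit_det A).mpr hA.det_pos.ne'.isUnit
  rw [le_algebraMap_iff_spectrum_le (ha := hA.inv.isHermitian.isSelfAdjoint)]
  intro x hx
  rw [nonsing_inv_eq_ringInverse, ← hu.unit_spec, Ring.inverse_unit, ← spectrum.inv₀_mem_iff,
    hu.unit_spec, hA.isHermitian.spectrum_real_eq_range_eigenvalues] at hx
  obtain ⟨i, hi⟩ := hx
  have hcx : c ≤ x⁻¹ := hi ▸ hc i
  exact (le_inv_comm₀ hc0 (inv_pos.mp (hc0.trans_le hcx))).mp hcx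

theorem Matrix.PosSemidef.det_le_pow {A : Matrix ι ι ℝ} (hA : A.PosSemidef) {c : ℝ}
    (hc : ∀ i, hA.isHermitian.eigenvalues i ≤ c) :
    A.det ≤ c ^ Fintype.card ι := by
  calc A.det = ∏ i, hA.isHermitian.eigenvalues i := by
        exact_mod_cast hA.isHermitian.det_eq_prod_eigenvalues
    _ ≤ ∏ _i : ι, c := Finset.prod_le_prod (fun i _ => hA.eigenvalues_nonneg i) fun i _ => hc i
    _ = c ^ Fintype.card ι := by rw [Finset.prod_const, Finset.card_univ]

end SpectralBounds

section EuclNorm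

variable {d : ℕ}

theorem euclNorm_eq_norm_toLp (v : Fin d → ℝ) : euclNorm v = ‖WithLp.toLp 2 v‖ := by
  simp [euclNorm, EuclideanSpace.norm_eq]

theorem euclNorm_sq (v : Fin d → ℝ) : euclNorm v ^ 2 = v ⬝ᵥ v := by
  rw [euclNorm, Real.sq_sqrt (by positivity)]
  simp [dotProduct, sq]

theorem euclNorm_sub_le (x y : Fin d → ℝ) : euclNorm (x - y) ≤ euclNorm x + euclNorm y := by
  simpa [euclNorm_eq_norm_toLp, WithLp.toLp_sub] using
    norm_sub_le (WithLp.toLp 2 x) (WithLp.toLp 2 y)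

end EuclNorm

section Gaussian

variable {d : ℕ} {Sig : Matrix (Fin d) (Fin d) ℝ}

theorem quadForm_nonneg (hSig : Sig.PosDef) (v : Fin d → ℝ) : 0 ≤ quadForm Sig v := by
  simpa [quadForm] using hSig.inv.posSemidef.dotProduct_mulVec_nonneg v

theorem quadForm_le_of_euclNorm_le (hSig : Sig.PosDef) {γ : ℝ} (hγ0 : 0 < γ)
    (hγ : ∀ i, γ ≤ hSig.isHermitian.eigenvalues i) {v : Fin d → ℝ} {r : ℝ} (hv : euclNorm v ≤ r) :
    quadForm Sig v ≤ r ^ 2 / γ := by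
  calc quadForm Sig v ≤ γ⁻¹ * euclNorm v ^ 2 := by
        rw [euclNorm_sq]
        exact dotProduct_mulVec_le_of_le_algebraMap (hSig.inv_le_algebraMap_inv hγ0 hγ) v
    _ ≤ γ⁻¹ * r ^ 2 := by gcongr; exact Real.sqrt_nonneg _
    _ = r ^ 2 / γ := inv_mul_eq_div _ _

theorem neg_mul_sq_le_neg_mul_quadForm (hSig : Sig.PosDef) {γ : ℝ} (hγ0 : 0 < γ)
    (hγ : ∀ i, γ ≤ hSig.isHermitian.eigenvalues i) {β : ℝ} (hβ : 0 ≤ β) {v : Fin d → ℝ} {r : ℝ}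
    (hv : euclNorm v ≤ r) : -(β / (2 * γ)) * r ^ 2 ≤ -(β / 2) * quadForm Sig v := by
  have := mul_le_mul_of_nonneg_left (quadForm_le_of_euclNorm_le hSig hγ0 hγ hv)
    (by positivity : 0 ≤ β / 2)
  have hrw : β / 2 * (r ^ 2 / γ) = β / (2 * γ) * r ^ 2 := by ring
  linarith

theorem gaussDens_le_const (hSig : Sig.PosDef) {β : ℝ} (hβ : 0 ≤ β) (μ x : Fin d → ℝ) :
    gaussDens Sig β μ x ≤ (β / (2 * Real.pi)) ^ ((d : ℝ) / 2) / Real.sqrt Sig.det := by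
  have hq := quadForm_nonneg hSig (x - μ)
  refine mul_le_of_le_one_right (by positivity) (Real.exp_le_one_iff.mpr ?_)
  nlinarith

theorem gaussDens_pos (hSig : Sig.PosDef) {β : ℝ} (hβ : 0 < β) (μ x : Fin d → ℝ) :
    0 < gaussDens Sig β μ x := by
  have := hSig.det_pos
  unfold gaussDens
  positivity

theorem rpow_le_gaussDens_const (hSig : Sig.PosDef) {γ : ℝ} (hγ0 : 0 < γ)
    (hγ : ∀ i, hSig.isHermitian.eigenvalues i ≤ γ) {β : ℝ} (hβ : 0 ≤ β) :
    (β / (2 * Real.pi * γ)) ^ ((d : ℝ) / 2)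
      ≤ (β / (2 * Real.pi)) ^ ((d : ℝ) / 2) / Real.sqrt Sig.det := by
  have hdet : Real.sqrt Sig.det ≤ γ ^ ((d : ℝ) / 2) := by
    calc Real.sqrt Sig.det ≤ Real.sqrt (γ ^ d) := by
          simpa using Real.sqrt_le_sqrt (hSig.posSemidef.det_le_pow hγ)
      _ = γ ^ ((d : ℝ) / 2) := by
          rw [Real.sqrt_eq_rpow, ← Real.rpow_natCast, ← Real.rpow_mul hγ0.le, mul_one_div]
  rw [← div_div, Real.div_rpow (by positivity) hγ0.le]
  exact div_le_div_of_nonneg_left (by positivity) (Real.sqrt_pos.mpr hSig.det_pos) hdet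

theorem gaussDens_lower_bound (hSig : Sig.PosDef) {γmax γmin : ℝ}
    (hmax0 : 0 < γmax) (hmax : ∀ i, hSig.isHermitian.eigenvalues i ≤ γmax)
    (hmin0 : 0 < γmin) (hmin : ∀ i, γmin ≤ hSig.isHermitian.eigenvalues i)
    {β : ℝ} (hβ : 0 ≤ β) {μ x : Fin d → ℝ} {r : ℝ} (hr : euclNorm (x - μ) ≤ r) :
    (β / (2 * Real.pi * γmax)) ^ ((d : ℝ) / 2) * Real.exp (-(β / (2 * γmin)) * r ^ 2)
      ≤ gaussDens Sig β μ x := by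
  exact mul_le_mul (rpow_le_gaussDens_const hSig hmax0 hmax hβ)
    (Real.exp_le_exp.mpr (neg_mul_sq_le_neg_mul_quadForm hSig hmin0 hmin hβ hr))
    (Real.exp_pos _).le (by have := hSig.det_pos; positivity)

theorem mul_exp_le_gaussDens_posterior {n : ℕ} (hSig : Sig.PosDef) {β : ℝ} (hβ : 0 < β)
    (μ : Fin n → Fin d → ℝ) {w : Fin n → ℝ} (hw : ∀ j, 0 < w j) (hw1 : ∑ j, w j = 1)
    (j : Fin n) (x : Fin d → ℝ) :
    w j * Real.exp (-(β / 2) * quadForm Sig (x - μ j))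
      ≤ w j * gaussDens Sig β (μ j) x / ∑ k, w k * gaussDens Sig β (μ k) x := by
  set C := (β / (2 * Real.pi)) ^ ((d : ℝ) / 2) / Real.sqrt Sig.det
  have hC : 0 < C := by have := hSig.det_pos; positivity
  have hpos : 0 < w j * gaussDens Sig β (μ j) x := mul_pos (hw j) (gaussDens_pos hSig hβ _ _)
  have hmix_pos : 0 < ∑ k, w k * gaussDens Sig β (μ k) x :=
    hpos.trans_le (Finset.single_le_sum
      (fun k _ => (mul_pos (hw k) (gaussDens_pos hSig hβ _ _)).le) (Finset.mem_univ j))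
  have hmix_le : ∑ k, w k * gaussDens Sig β (μ k) x ≤ C := by
    calc ∑ k, w k * gaussDens Sig β (μ k) x ≤ ∑ k, w k * C :=
          Finset.sum_le_sum fun k _ => mul_le_mul_of_nonneg_left
            (gaussDens_le_const hSig hβ.le _ _) (hw k).le
      _ = C := by rw [← Finset.sum_mul, hw1, one_mul]
  calc w j * Real.exp (-(β / 2) * quadForm Sig (x - μ j))
      = w j * gaussDens Sig β (μ j) x / C := by
        rw [gaussDens, mul_left_comm, mul_div_cancel_left₀ _ hC.ne']
    _ ≤ w j * gaussDens Sig β (μ j) x / ∑ k, w k * gaussDens Sig β (μ k) x :=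
        div_le_div_of_nonneg_left hpos.le hmix_pos hmix_le

end Gaussian

theorem stmt12_general (d L n : ℕ)
    (μ : Fin n → Fin d → ℝ)
    (Sig : Matrix (Fin d) (Fin d) ℝ) (hSig : Sig.PosDef)
    (γmax γmin : ℝ)
    (hγmax : IsGreatest (Set.range hSig.isHermitian.eigenvalues) γmax)
    (hγmin : IsLeast (Set.range hSig.isHermitian.eigenvalues) γmin)
    (w : Fin n → ℝ) (hw : ∀ j, 0 < w j) (hw1 : ∑ j, w j = 1)
    (β : Fin L → ℝ) (hβ : ∀ i, 0 < β i ∧ β i ≤ 1)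
    (D : ℝ) (hD : D = max (sSup (Set.range fun k => euclNorm (μ k))) (Real.sqrt γmin)) :
    ∀ (i : Fin L) (j : Fin n) (x : Fin d → ℝ),
      (β i / (2 * Real.pi * γmax)) ^ ((d : ℝ) / 2) *
          Real.exp (-(β i / (2 * γmin)) * (euclNorm x + D) ^ 2)
        ≤ gaussDens Sig (β i) (μ j) x ∧
      w j * Real.exp (-(β i / γmin) * (euclNorm x + D) ^ 2)
        ≤ w j * gaussDens Sig (β i) (μ j) x / ∑ k, w k * gaussDens Sig (β i) (μ k) x := by
  intro i j x
  have hβi := (hβ i).1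
  have hmax : ∀ k, hSig.isHermitian.eigenvalues k ≤ γmax := fun k => hγmax.2 ⟨k, rfl⟩
  have hmin : ∀ k, γmin ≤ hSig.isHermitian.eigenvalues k := fun k => hγmin.2 ⟨k, rfl⟩
  have hmax0 : 0 < γmax := by
    obtain ⟨k, hk⟩ := hγmax.1; exact hk ▸ hSig.eigenvalues_pos k
  have hmin0 : 0 < γmin := by
    obtain ⟨k, hk⟩ := hγmin.1; exact hk ▸ hSig.eigenvalues_pos k
  have hdist : euclNorm (x - μ j) ≤ euclNorm x + D := by
    have hμ : euclNorm (μ j) ≤ D := by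
      rw [hD]
      exact le_max_of_le_left (le_csSup (Set.finite_range _).bddAbove ⟨j, rfl⟩)
    linarith [euclNorm_sub_le x (μ j)]
  refine ⟨gaussDens_lower_bound hSig hmax0 hmax hmin0 hmin hβi.le hdist, ?_⟩
  have hexp : -(β i / γmin) * (euclNorm x + D) ^ 2 ≤ -(β i / 2) * quadForm Sig (x - μ j) := by
    refine le_trans ?_ (neg_mul_sq_le_neg_mul_quadForm hSig hmin0 hmin hβi.le hdist)
    rw [neg_mul, neg_mul, neg_le_neg_iff]
    gcongr
    linarith
  exact (mul_le_mul_of_nonneg_left (Real.exp_le_exp.mpr hexp) (hw j).le).trans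
    (mul_exp_le_gaussDens_posterior hSig hβi μ hw hw1 j x)

theorem stmt12 (d L n : ℕ) (hn : 0 < n) (hL : 0 < L)
    (μ : Fin n → Fin d → ℝ)
    (Sig : Matrix (Fin d) (Fin d) ℝ) (hSig : Sig.PosDef)
    (γmax γmin : ℝ)
    (hγmax : IsGreatest (Set.range hSig.isHermitian.eigenvalues) γmax)
    (hγmin : IsLeast (Set.range hSig.isHermitian.eigenvalues) γmin)
    (w : Fin n → ℝ) (hw : ∀ j, 0 < w j) (hw1 : ∑ j, w j = 1)
    (β : Fin L → ℝ) (hβ : ∀ i, 0 < β i ∧ β i ≤ 1)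
    (D : ℝ) (hD : D = max (sSup (Set.range fun k => euclNorm (μ k))) (Real.sqrt γmin)) :
    ∀ (i : Fin L) (j : Fin n) (x : Fin d → ℝ),
      (β i / (2 * Real.pi * γmax)) ^ ((d : ℝ) / 2) *
          Real.exp (-(β i / (2 * γmin)) * (euclNorm x + D) ^ 2)
        ≤ gaussDens Sig (β i) (μ j) x ∧
      w j * Real.exp (-(β i / γmin) * (euclNorm x + D) ^ 2)
        ≤ w j * gaussDens Sig (β i) (μ j) x / ∑ k, w k * gaussDens Sig (β i) (μ k) x :=
  stmt12_general d L n μ Sig hSig γmax γmin hγmax hγmin w hw hw1 β hβ D hD
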